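/- On C_3, the number of configurations reachable from (c,0,0) equals (3k^2+3k-2)/2 if c=3k, (3k^2+5k+2)/2 if c=3k+1, and (3k^2+7k+4)/2 if c=3k+2. -/
import Mathlib

def LegalStep {n : ℕ} (G : SimpleGraph (Fin n)) [DecidableRel G.Adj]
    (C D : Fin n → ℤ) : Prop :=
  ∃ i : Fin n, (G.degree i : ℤ) ≤ C i ∧
    D = C - (G.lapMatrix ℤ).mulVec (Pi.single i 1)

def reachableFromC3 (c : ℕ) : Set (Fin 3 → ℕ) :=
  {C' | Relation.ReflTransGen (LegalStep (SimpleGraph.cycleGraph 3))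
    (fun i => if i = 0 then (c : ℤ) else 0) (fun i => (C' i : ℤ))}

namespace CR3

abbrev Rel3 : (Fin 3 → ℤ) → (Fin 3 → ℤ) → Prop := LegalStep (SimpleGraph.cycleGraph 3)

def col (i : Fin 3) : Fin 3 → ℤ := fun j => if j = i then 2 else -1

lemma mulVec_lap (i : Fin 3) :
    ((SimpleGraph.cycleGraph 3).lapMatrix ℤ).mulVec (Pi.single i 1) = col i := by
  have h : (SimpleGraph.cycleGraph 3).lapMatrix ℤ = !![2,-1,-1;-1,2,-1;-1,-1,2] := by decide
  rw [h]
  funext j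
  rw [Matrix.mulVec_single]
  fin_cases i <;> fin_cases j <;> simp [col] <;> rfl

lemma step_iff (C D : Fin 3 → ℤ) :
    Rel3 C D ↔ ∃ i, 2 ≤ C i ∧ D = C - col i := by
  have hdeg : ∀ i : Fin 3, (SimpleGraph.cycleGraph 3).degree i = 2 := by decide
  unfold Rel3 LegalStep
  constructor
  · rintro ⟨i, h1, h2⟩
    exact ⟨i, by rw [hdeg i] at h1; exact_mod_cast h1, by rw [mulVec_lap] at h2; exact h2⟩
  · rintro ⟨i, h1, h2⟩
    exact ⟨i, by rw [hdeg i]; exact_mod_cast h1, by rw [mulVec_lap]; exact h2⟩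

lemma fire0 {a b d : ℤ} (h : 2 ≤ a) : Rel3 ![a,b,d] ![a-2,b+1,d+1] := by
  rw [step_iff]
  refine ⟨0, by simpa using h, ?_⟩
  funext j
  fin_cases j <;> simp [col] <;> ring

lemma fire1 {a b d : ℤ} (h : 2 ≤ b) : Rel3 ![a,b,d] ![a+1,b-2,d+1] := by
  rw [step_iff]
  refine ⟨1, by simpa using h, ?_⟩
  funext j
  fin_cases j <;> simp [col] <;> ring

lemma fire2 {a b d : ℤ} (h : 2 ≤ d) : Rel3 ![a,b,d] ![a+1,b+1,d-2] := by
  rw [step_iff]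
  refine ⟨2, by simpa using h, ?_⟩
  funext j
  fin_cases j <;> simp [col] <;> ring

def Good (c : ℤ) (C : Fin 3 → ℤ) : Prop :=
  0 ≤ C 0 ∧ 0 ≤ C 1 ∧ 0 ≤ C 2 ∧ C 0 + C 1 + C 2 = c ∧ (3:ℤ) ∣ (C 1 - C 2) ∧
    ¬(C 0 = 0 ∧ C 1 = 0) ∧ ¬(C 0 = 0 ∧ C 2 = 0)

lemma good_step {c : ℤ} {C D : Fin 3 → ℤ} (hG : Good c C) (h : Rel3 C D) : Good c D := by
  obtain ⟨i, hi, rfl⟩ := (step_iff C D).mp h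
  obtain ⟨h0, h1, h2, hsum, hdvd, hx1, hx2⟩ := hG
  fin_cases i
  · have hi' : 2 ≤ C 0 := hi
    refine ⟨?_, ?_, ?_, ?_, ?_, ?_, ?_⟩ <;> simp [Pi.sub_apply, col] <;> omega
  · have hi' : 2 ≤ C 1 := hi
    refine ⟨?_, ?_, ?_, ?_, ?_, ?_, ?_⟩ <;> simp [Pi.sub_apply, col] <;> omega
  · have hi' : 2 ≤ C 2 := hi
    refine ⟨?_, ?_, ?_, ?_, ?_, ?_, ?_⟩ <;> simp [Pi.sub_apply, col] <;> omega

lemma reach_good {c : ℤ} (hc : 1 ≤ c) {C : Fin 3 → ℤ}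
    (h : Relation.ReflTransGen Rel3 ![c,0,0] C) : Good c C := by
  induction h with
  | refl =>
    refine ⟨?_, ?_, ?_, ?_, ?_, ?_, ?_⟩ <;> simp <;> omega
  | tail _ hstep ih => exact good_step ih hstep


open Finset
lemma vec3_congr {x y z x' y' z' : ℤ} (hx : x = x') (hy : y = y') (hz : z = z') :
    (![x,y,z] : Fin 3 → ℤ) = ![x',y',z'] := by rw [hx, hy, hz]

lemma reach_diag : ∀ (m : ℕ) (a : ℤ), 0 ≤ a →
    Relation.ReflTransGen Rel3 ![a + 2*(m:ℤ), 0, 0] ![a, (m:ℤ), (m:ℤ)] := by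
  intro m
  induction m with
  | zero =>
    intro a ha
    have e : (![a + 2*((0:ℕ):ℤ), 0, 0] : Fin 3 → ℤ) = ![a, ((0:ℕ):ℤ), ((0:ℕ):ℤ)] :=
      vec3_congr (by push_cast; ring) (by push_cast) (by push_cast)
    rw [e]
  | succ m ih =>
    intro a ha
    have h1 := ih (a+2) (by omega)
    have e : (![a + 2*((m+1:ℕ):ℤ), 0, 0] : Fin 3 → ℤ) = ![(a+2) + 2*(m:ℤ), 0, 0] :=
      vec3_congr (by push_cast; ring) rfl rfl
    rw [e]
    refine h1.tail ?_
    have h2 := fire0 (a := a+2) (b := (m:ℤ)) (d := (m:ℤ)) (by omega)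
    have e2 : (![a+2-2, (m:ℤ)+1, (m:ℤ)+1] : Fin 3 → ℤ) = ![a, ((m+1:ℕ):ℤ), ((m+1:ℕ):ℤ)] :=
      vec3_congr (by ring) (by push_cast; ring) (by push_cast; ring)
    rw [e2] at h2
    exact h2

lemma reach_all (c : ℤ) (hc : 1 ≤ c) : ∀ n : ℕ, ∀ C : Fin 3 → ℤ, Good c C →
    (C 1 - C 2).natAbs = n → Relation.ReflTransGen Rel3 ![c,0,0] C := by
  intro n
  induction n using Nat.strong_induction_on with
  | _ n ih =>
  intro C hG hn
  obtain ⟨h0, h1, h2, hsum, hdvd, hx1, hx2⟩ := hG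
  have hC : C = ![C 0, C 1, C 2] := by
    funext j; fin_cases j <;> rfl
  rcases lt_trichotomy (C 1) (C 2) with hlt | heq | hgt
  · -- C 1 < C 2, so C 2 - C 1 ≥ 3
    have h3 : C 1 + 3 ≤ C 2 := by omega
    by_cases hb : 1 ≤ C 1
    · -- predecessor ![C0+1, C1+1, C2-2]
      have hG' : Good c ![C 0 + 1, C 1 + 1, C 2 - 2] := by
        refine ⟨?_, ?_, ?_, ?_, ?_, ?_, ?_⟩ <;> simp <;> omega
      have hr := ih ((C 1 + 1) - (C 2 - 2)).natAbs (by omega) _ hG' (by simp)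
      have s1 := fire1 (a := C 0 + 1) (b := C 1 + 1) (d := C 2 - 2) (by omega)
      rw [vec3_congr (show C 0 + 1 + 1 = C 0 + 2 by ring) (show C 1 + 1 - 2 = C 1 - 1 by ring)
        (show C 2 - 2 + 1 = C 2 - 1 by ring)] at s1
      have s2 := fire0 (a := C 0 + 2) (b := C 1 - 1) (d := C 2 - 1) (by omega)
      rw [vec3_congr (show C 0 + 2 - 2 = C 0 by ring) (show C 1 - 1 + 1 = C 1 by ring)
        (show C 2 - 1 + 1 = C 2 by ring), ← hC] at s2
      exact (hr.tail s1).tail s2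
    · -- C 1 = 0
      have hb0 : C 1 = 0 := by omega
      by_cases ha : 1 ≤ C 0
      · have hG' : Good c ![C 0 - 1, 2, C 2 - 1] := by
          refine ⟨?_, ?_, ?_, ?_, ?_, ?_, ?_⟩ <;> simp <;> omega
        have hr := ih (2 - (C 2 - 1)).natAbs (by omega) _ hG' (by simp)
        have s1 := fire1 (a := C 0 - 1) (b := (2:ℤ)) (d := C 2 - 1) (by omega)
        rw [vec3_congr (show C 0 - 1 + 1 = C 0 by ring) (show (2:ℤ) - 2 = C 1 by omega)
          (show C 2 - 1 + 1 = C 2 by ring), ← hC] at s1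
        exact hr.tail s1
      · exact absurd ⟨by omega, by omega⟩ hx1
  · -- diagonal
    have ht : ((C 1).toNat : ℤ) = C 1 := Int.toNat_of_nonneg h1
    have hr := reach_diag (C 1).toNat (C 0) h0
    rw [ht] at hr
    rw [vec3_congr (show C 0 + 2 * C 1 = c by omega) rfl rfl] at hr
    rw [hC, ← heq]
    exact hr
  · -- C 1 > C 2
    have h3 : C 2 + 3 ≤ C 1 := by omega
    by_cases hd : 1 ≤ C 2
    · have hG' : Good c ![C 0 + 1, C 1 - 2, C 2 + 1] := by
        refine ⟨?_, ?_, ?_, ?_, ?_, ?_, ?_⟩ <;> simp <;> omega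
      have hr := ih ((C 1 - 2) - (C 2 + 1)).natAbs (by omega) _ hG' (by simp)
      have s1 := fire2 (a := C 0 + 1) (b := C 1 - 2) (d := C 2 + 1) (by omega)
      rw [vec3_congr (show C 0 + 1 + 1 = C 0 + 2 by ring) (show C 1 - 2 + 1 = C 1 - 1 by ring)
        (show C 2 + 1 - 2 = C 2 - 1 by ring)] at s1
      have s2 := fire0 (a := C 0 + 2) (b := C 1 - 1) (d := C 2 - 1) (by omega)
      rw [vec3_congr (show C 0 + 2 - 2 = C 0 by ring) (show C 1 - 1 + 1 = C 1 by ring)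
        (show C 2 - 1 + 1 = C 2 by ring), ← hC] at s2
      exact (hr.tail s1).tail s2
    · have hd0 : C 2 = 0 := by omega
      by_cases ha : 1 ≤ C 0
      · have hG' : Good c ![C 0 - 1, C 1 - 1, 2] := by
          refine ⟨?_, ?_, ?_, ?_, ?_, ?_, ?_⟩ <;> simp <;> omega
        have hr := ih ((C 1 - 1) - 2).natAbs (by omega) _ hG' (by simp)
        have s1 := fire2 (a := C 0 - 1) (b := C 1 - 1) (d := (2:ℤ)) (by omega)
        rw [vec3_congr (show C 0 - 1 + 1 = C 0 by ring) (show C 1 - 1 + 1 = C 1 by ring)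
          (show (2:ℤ) - 2 = C 2 by omega), ← hC] at s1
        exact hr.tail s1
      · exact absurd ⟨by omega, by omega⟩ hx2


lemma cnt (j : ℕ) (hj : j < 3) : ∀ n : ℕ,
    ((Finset.range n).filter (fun a => a % 3 = j)).card = (n + 2 - j) / 3 := by
  intro n
  induction n with
  | zero => simp; omega
  | succ n ih =>
    rw [Finset.range_add_one, Finset.filter_insert]
    by_cases h : n % 3 = j
    · rw [if_pos h, Finset.card_insert_of_notMem (by simp)]
      omega
    · rw [if_neg h]
      omega

def B (c : ℕ) : Finset (ℕ × ℕ) :=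
  ((Finset.range (c+1)) ×ˢ (Finset.range (c+1))).filter
    (fun p => p.1 + p.2 ≤ c ∧ p.1 % 3 = p.2 % 3)

def Layer (c : ℕ) : Finset (ℕ × ℕ) :=
  ((Finset.range (c+1)) ×ˢ (Finset.range (c+1))).filter
    (fun p => p.1 + p.2 = c ∧ p.1 % 3 = p.2 % 3)

lemma B_succ (c : ℕ) : B (c+1) = B c ∪ Layer (c+1) := by
  ext p
  simp only [B, Layer, Finset.mem_union, Finset.mem_filter, Finset.mem_product,
    Finset.mem_range]
  omega

lemma B_disj (c : ℕ) : Disjoint (B c) (Layer (c+1)) := by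
  rw [Finset.disjoint_left]
  intro p hp hq
  simp only [B, Layer, Finset.mem_filter, Finset.mem_product, Finset.mem_range] at hp hq
  omega

lemma layer_card (c : ℕ) : (Layer c).card = (c + 3 - (2*c) % 3) / 3 := by
  have h : (Layer c).card = ((Finset.range (c+1)).filter (fun a => a % 3 = (2*c) % 3)).card := by
    apply Finset.card_bij' (fun p _ => p.1) (fun a _ => (a, c - a))
    · intro p hp
      simp only [Layer, Finset.mem_filter, Finset.mem_product, Finset.mem_range] at hp
      simp only [Finset.mem_filter, Finset.mem_range]
      omega
    · intro a ha
      simp only [Finset.mem_filter, Finset.mem_range] at ha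
      simp only [Layer, Finset.mem_filter, Finset.mem_product, Finset.mem_range]
      omega
    · intro p hp
      simp only [Layer, Finset.mem_filter, Finset.mem_product, Finset.mem_range] at hp
      ext <;> simp <;> omega
    · intro a ha
      simp
  rw [h, cnt _ (by omega)]

lemma B_card_succ (c : ℕ) : (B (c+1)).card = (B c).card + (c + 4 - (2*(c+1)) % 3) / 3 := by
  rw [B_succ, Finset.card_union_of_disjoint (B_disj c), layer_card]

lemma B_card_add3 (c : ℕ) : (B (c+3)).card = (B c).card + (c + 3) := by
  have h1 := B_card_succ c
  have h2 := B_card_succ (c+1)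
  have h3 := B_card_succ (c+2)
  have e1 : B (c+1+1) = B (c+2) := by norm_num
  have e2 : B (c+2+1) = B (c+3) := by norm_num
  rw [e1] at h2; rw [e2] at h3
  obtain ⟨q, r, hr, rfl⟩ : ∃ q r, r < 3 ∧ c = 3*q + r := ⟨c/3, c%3, by omega, by omega⟩
  interval_cases r <;> omega

lemma B_card_0 : (B 0).card = 1 := by decide
lemma B_card_1 : (B 1).card = 1 := by decide
lemma B_card_2 : (B 2).card = 2 := by decide

lemma cardB0 : ∀ k : ℕ, 2 * (B (3*k)).card = 3*k^2 + 3*k + 2 := by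
  intro k
  induction k with
  | zero => norm_num [B_card_0]
  | succ k ih =>
    have h := B_card_add3 (3*k)
    have e : 3*k+3 = 3*(k+1) := by ring
    rw [e] at h
    have e2 : (k+1)^2 = k^2 + 2*k + 1 := by ring
    rw [e2]
    obtain ⟨m, hm⟩ : ∃ m, m = k^2 := ⟨_, rfl⟩
    rw [← hm] at ih ⊢
    omega

lemma cardB1 : ∀ k : ℕ, 2 * (B (3*k+1)).card = 3*k^2 + 5*k + 2 := by
  intro k
  induction k with
  | zero => norm_num [B_card_1]
  | succ k ih =>
    have h := B_card_add3 (3*k+1)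
    have e : 3*k+1+3 = 3*(k+1)+1 := by ring
    rw [e] at h
    have e2 : (k+1)^2 = k^2 + 2*k + 1 := by ring
    rw [e2]
    obtain ⟨m, hm⟩ : ∃ m, m = k^2 := ⟨_, rfl⟩
    rw [← hm] at ih ⊢
    omega

lemma cardB2 : ∀ k : ℕ, 2 * (B (3*k+2)).card = 3*k^2 + 7*k + 4 := by
  intro k
  induction k with
  | zero => norm_num [B_card_2]
  | succ k ih =>
    have h := B_card_add3 (3*k+2)
    have e : 3*k+2+3 = 3*(k+1)+2 := by ring
    rw [e] at h
    have e2 : (k+1)^2 = k^2 + 2*k + 1 := by ring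
    rw [e2]
    obtain ⟨m, hm⟩ : ∃ m, m = k^2 := ⟨_, rfl⟩
    rw [← hm] at ih ⊢
    omega

def T (c : ℕ) : Finset (ℕ × ℕ) :=
  ((Finset.range (c+1)) ×ˢ (Finset.range (c+1))).filter
    (fun p => p.1 + p.2 ≤ c ∧ p.1 % 3 = p.2 % 3 ∧
      ¬(p.1 + p.2 = c ∧ p.1 = 0) ∧ ¬(p.1 + p.2 = c ∧ p.2 = 0))

lemma T_card_of_not_dvd (c : ℕ) (hc : ¬ (c % 3 = 0)) : (T c).card = (B c).card := by
  congr 1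
  ext p
  simp only [T, B, Finset.mem_filter, Finset.mem_product, Finset.mem_range]
  omega

lemma T_card_of_dvd (c : ℕ) (hc : c % 3 = 0) (hc1 : 1 ≤ c) :
    (T c).card = (B c).card - 2 := by
  have hsub : T c = B c \ {(0,c), (c,0)} := by
    ext p
    simp only [T, B, Finset.mem_sdiff, Finset.mem_filter, Finset.mem_product,
      Finset.mem_range, Finset.mem_insert, Finset.mem_singleton, Prod.ext_iff]
    omega
  rw [hsub, Finset.card_sdiff_of_subset]
  · congr 1
    rw [Finset.card_insert_of_notMem (by simp [Prod.ext_iff]; omega), Finset.card_singleton]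
  · intro p hp
    simp only [Finset.mem_insert, Finset.mem_singleton] at hp
    simp only [B, Finset.mem_filter, Finset.mem_product, Finset.mem_range]
    rcases hp with rfl | rfl <;> simp <;> omega


def fvec (c : ℕ) (p : ℕ × ℕ) : Fin 3 → ℕ := ![c - p.1 - p.2, p.1, p.2]

lemma setEq (c : ℕ) (hc : 1 ≤ c) :
    reachableFromC3 c = ↑((T c).image (fvec c)) := by
  have hstart : (fun i : Fin 3 => if i = 0 then (c:ℤ) else 0) = ![(c:ℤ),0,0] := by
    funext j; fin_cases j <;> rfl
  have hc' : (1:ℤ) ≤ (c:ℤ) := by exact_mod_cast hc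
  ext C'
  simp only [reachableFromC3, Set.mem_setOf_eq, Finset.coe_image, Set.mem_image,
    Finset.mem_coe]
  rw [hstart]
  constructor
  · intro h
    have hG := reach_good hc' h
    have h0 : (0:ℤ) ≤ (C' 0 : ℤ) := hG.1
    have hsum : (C' 0 : ℤ) + C' 1 + C' 2 = c := hG.2.2.2.1
    have hdvd : (3:ℤ) ∣ (C' 1 : ℤ) - C' 2 := hG.2.2.2.2.1
    have hx1 : ¬((C' 0 : ℤ) = 0 ∧ (C' 1 : ℤ) = 0) := hG.2.2.2.2.2.1
    have hx2 : ¬((C' 0 : ℤ) = 0 ∧ (C' 2 : ℤ) = 0) := hG.2.2.2.2.2.2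
    refine ⟨(C' 1, C' 2), ?_, ?_⟩
    · simp only [T, Finset.mem_filter, Finset.mem_product, Finset.mem_range]
      omega
    · funext j
      fin_cases j
      · show c - C' 1 - C' 2 = C' 0
        omega
      · rfl
      · rfl
  · rintro ⟨p, hp, rfl⟩
    simp only [T, Finset.mem_filter, Finset.mem_product, Finset.mem_range] at hp
    have hcast : (fun i => ((fvec c p) i : ℤ)) =
        ![((c - p.1 - p.2 : ℕ) : ℤ), (p.1 : ℤ), (p.2 : ℤ)] := by
      funext j; fin_cases j <;> rfl
    rw [hcast]
    refine reach_all (c:ℤ) hc' _ _ ⟨?_, ?_, ?_, ?_, ?_, ?_, ?_⟩ rfl <;> simp <;> omega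

lemma fvec_injOn (c : ℕ) : Set.InjOn (fvec c) (T c) := by
  intro p _ q _ h
  have h1 := congrFun h 1
  have h2 := congrFun h 2
  simp only [fvec] at h1 h2
  exact Prod.ext (by simpa using h1) (by simpa using h2)


end CR3

/-- On `C_3`, for `c ≥ 1` the number of configurations reachable from `(c,0,0)` equals
`(3k²+3k-2)/2` if `c = 3k`, `(3k²+5k+2)/2` if `c = 3k+1`, and `(3k²+7k+4)/2` if
`c = 3k+2`. -/
theorem card_reachable_C3 (c k : ℕ) (hc : 0 < c) :
    (c = 3 * k → (reachableFromC3 c).ncard = (3 * k ^ 2 + 3 * k - 2) / 2) ∧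
    (c = 3 * k + 1 → (reachableFromC3 c).ncard = (3 * k ^ 2 + 5 * k + 2) / 2) ∧
    (c = 3 * k + 2 → (reachableFromC3 c).ncard = (3 * k ^ 2 + 7 * k + 4) / 2) := by
  have hbase : (reachableFromC3 c).ncard = (CR3.T c).card := by
    rw [CR3.setEq c hc, Set.ncard_coe_finset,
      Finset.card_image_of_injOn (CR3.fvec_injOn c)]
  refine ⟨?_, ?_, ?_⟩ <;> intro hck <;> subst hck
  · rw [hbase, CR3.T_card_of_dvd _ (by omega) (by omega)]
    have h := CR3.cardB0 k
    obtain ⟨m, hm⟩ : ∃ m, m = k^2 := ⟨_, rfl⟩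
    rw [← hm] at h ⊢
    omega
  · rw [hbase, CR3.T_card_of_not_dvd _ (by omega)]
    have h := CR3.cardB1 k
    obtain ⟨m, hm⟩ : ∃ m, m = k^2 := ⟨_, rfl⟩
    rw [← hm] at h ⊢
    omega
  · rw [hbase, CR3.T_card_of_not_dvd _ (by omega)]
    have h := CR3.cardB2 k
    obtain ⟨m, hm⟩ : ∃ m, m = k^2 := ⟨_, rfl⟩
    rw [← hm] at h ⊢
    omega
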